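/- Let n ≥ 2, let g be holomorphic on an open neighborhood of the origin in ℂⁿ with g(0) = 0 and g not identically zero on any neighborhood of 0, and let f = g^m with an integer m ≥ 2. Then the Milnor fiber of f at the origin is disconnected: there exists r₀ > 0 such that for every 0 < r ≤ r₀ there exists δ₀ > 0 such that for every η ∈ ℂ with 0 < |η| ≤ δ₀, the set f⁻¹(η) ∩ B_r is nonempty and not connected. -/

import Mathlib

open Metric
open scoped BigOperators

noncomputable section

/-- `ℂⁿ` with the Euclidean norm. -/
abbrev Cn (n : ℕ) := EuclideanSpace ℂ (Fin n)

/-- if `f = g^m` with `g` holomorphic, `g(0) = 0`, `g` not identically zero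
near `0`, and `m ≥ 2`, then the Milnor fiber of `f` at the origin is nonempty and
disconnected. -/
theorem milnor_fiber_power_disconnected {n : ℕ} (hn : 2 ≤ n)
    (g : Cn n → ℂ) (U : Set (Cn n)) (hU : IsOpen U) (h0U : (0 : Cn n) ∈ U)
    (hol : DifferentiableOn ℂ g U) (hg0 : g 0 = 0)
    (hnz : ∀ V ∈ nhds (0 : Cn n), ∃ z ∈ V, g z ≠ 0)
    (m : ℕ) (hm : 2 ≤ m) (f : Cn n → ℂ) (hf : ∀ z, f z = g z ^ m) :
    ∃ r₀ > 0, ∀ r : ℝ, 0 < r → r ≤ r₀ → ∃ δ₀ > 0, ∀ η : ℂ, η ≠ 0 → ‖η‖ ≤ δ₀ →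
      (f ⁻¹' {η} ∩ closedBall 0 r).Nonempty ∧
      ¬ IsConnected (f ⁻¹' {η} ∩ closedBall (0 : Cn n) r) := by
  obtain ⟨ε₀, hε₀, hballU⟩ := Metric.isOpen_iff.mp hU 0 h0U
  refine ⟨ε₀ / 2, by positivity, ?_⟩
  intro r hr hrr₀
  have hrU : closedBall (0 : Cn n) r ⊆ U := fun x hx =>
    hballU (mem_ball.mpr (lt_of_le_of_lt (mem_closedBall.mp hx) (by linarith)))
  -- pick a point in the ball where g is nonzero
  obtain ⟨z, hzball, hgz⟩ := hnz (ball 0 r) (ball_mem_nhds 0 hr)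
  have hz0 : z ≠ 0 := fun h => hgz (h ▸ hg0)
  have hzn : (0 : ℝ) < ‖z‖ := norm_pos_iff.mpr hz0
  set R : ℝ := r / ‖z‖ with hRdef
  have hR1 : 1 < R := (one_lt_div hzn).mpr (mem_ball_zero_iff.mp hzball)
  have hR0 : (0 : ℝ) < R := lt_trans one_pos hR1
  -- the one-variable restriction of g to the line through z
  set h : ℂ → ℂ := fun t => g (t • z) with hhdef
  have hmap : ∀ t : ℂ, ‖t‖ < R → t • z ∈ ball (0 : Cn n) r := by
    intro t ht
    rw [mem_ball_zero_iff, norm_smul]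
    calc ‖t‖ * ‖z‖ < R * ‖z‖ := by gcongr
      _ = r := div_mul_cancel₀ _ hzn.ne'
  have hballU' : ball (0 : Cn n) r ⊆ U := fun x hx => hrU (ball_subset_closedBall hx)
  have hdh : DifferentiableOn ℂ h (ball (0 : ℂ) R) := by
    apply hol.comp ((differentiable_id.smul_const z).differentiableOn)
    intro t ht
    exact hballU' (hmap t (mem_ball_zero_iff.mp ht))
  have hanal : AnalyticOnNhd ℂ h (ball (0 : ℂ) R) := hdh.analyticOnNhd isOpen_ball
  have h0 : h 0 = 0 := by simp [hhdef, hg0]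
  have h1 : h 1 ≠ 0 := by simpa [hhdef] using hgz
  have h0mem : (0 : ℂ) ∈ ball (0 : ℂ) R := by simpa using hR0
  -- open mapping theorem for h
  have key : nhds (0 : ℂ) ≤ Filter.map h (nhds 0) := by
    rcases (hanal 0 h0mem).eventually_constant_or_nhds_le_map_nhds with hc | hle
    · exfalso
      have heq : Set.EqOn h 0 (ball (0 : ℂ) R) :=
        hanal.eqOn_zero_of_preconnected_of_eventuallyEq_zero
          (convex_ball (0:ℂ) R).isPreconnected h0mem
          (hc.mono fun x hx => by simpa [h0] using hx)
      exact h1 (heq (mem_ball_zero_iff.mpr (by simpa using hR1)))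
    · simpa [h0] using hle
  have himg : h '' ball (0 : ℂ) 1 ∈ nhds (0 : ℂ) :=
    key (Filter.image_mem_map (ball_mem_nhds 0 one_pos))
  obtain ⟨ε, hε, hεsub⟩ := Metric.mem_nhds_iff.mp himg
  refine ⟨(ε / 2) ^ m, by positivity, ?_⟩
  intro η hη hηδ
  have hm0 : 0 < m := by omega
  -- every m-th root of η is attained by g inside the ball
  have hfiber : ∀ ζ : ℂ, ζ ^ m = η → ∃ x ∈ ball (0 : Cn n) r, g x = ζ := by
    intro ζ hζ
    have habs : ‖ζ‖ ≤ ε / 2 := by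
      have h1' : ‖ζ‖ ^ m = ‖η‖ := by rw [← norm_pow, hζ]
      exact le_of_pow_le_pow_left₀ hm0.ne' (by positivity) (h1' ▸ hηδ)
    have : ζ ∈ ball (0 : ℂ) ε := by
      rw [mem_ball_zero_iff]; linarith
    obtain ⟨t, ht, hht⟩ := hεsub this
    exact ⟨t • z, hmap t (lt_trans (mem_ball_zero_iff.mp ht) hR1), hht⟩
  -- two distinct m-th roots of η
  obtain ⟨ζ₁, hζ₁⟩ := IsAlgClosed.exists_pow_nat_eq η hm0
  have hζ₁0 : ζ₁ ≠ 0 := fun h' => hη (by rw [← hζ₁, h', zero_pow hm0.ne'])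
  have hω := Complex.isPrimitiveRoot_exp m (by omega)
  set ω : ℂ := Complex.exp (2 * Real.pi * Complex.I / m) with hωdef
  have hω1 : ω ≠ 1 := hω.ne_one (by omega)
  set ζ₂ : ℂ := ω * ζ₁ with hζ₂def
  have hζ₂ : ζ₂ ^ m = η := by rw [hζ₂def, mul_pow, hω.pow_eq_one, one_mul, hζ₁]
  have hζ₂ne : ζ₂ ≠ ζ₁ := by
    intro h'
    exact hω1 (mul_right_cancel₀ hζ₁0 (by rw [← hζ₂def, h', one_mul]))
  obtain ⟨x₁, hx₁b, hgx₁⟩ := hfiber ζ₁ hζ₁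
  obtain ⟨x₂, hx₂b, hgx₂⟩ := hfiber ζ₂ hζ₂
  have hx₁F : x₁ ∈ f ⁻¹' {η} ∩ closedBall (0 : Cn n) r :=
    ⟨by simp [hf, hgx₁, hζ₁], ball_subset_closedBall hx₁b⟩
  have hx₂F : x₂ ∈ f ⁻¹' {η} ∩ closedBall (0 : Cn n) r :=
    ⟨by simp [hf, hgx₂, hζ₂], ball_subset_closedBall hx₂b⟩
  refine ⟨⟨x₁, hx₁F⟩, ?_⟩
  -- the set of m-th roots of η is finite
  have hRfin : Set.Finite {ζ : ℂ | ζ ^ m = η} := by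
    have hp : (Polynomial.X ^ m - Polynomial.C η : Polynomial ℂ) ≠ 0 :=
      Polynomial.X_pow_sub_C_ne_zero hm0 η
    have := Polynomial.finite_setOf_isRoot hp
    refine this.subset fun ζ hζ => ?_
    simp only [Set.mem_setOf_eq, Polynomial.IsRoot, Polynomial.eval_sub,
      Polynomial.eval_pow, Polynomial.eval_X, Polynomial.eval_C]
    rw [Set.mem_setOf_eq] at hζ
    rw [hζ, sub_self]
  -- separate ζ₁ from the other roots
  have hSfin : Set.Finite ({ζ : ℂ | ζ ^ m = η} \ {ζ₁}) := hRfin.diff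
  have hScl : IsClosed ({ζ : ℂ | ζ ^ m = η} \ {ζ₁}) := hSfin.isClosed
  have hζ₁S : ζ₁ ∈ ({ζ : ℂ | ζ ^ m = η} \ {ζ₁})ᶜ := fun h' => h'.2 rfl
  obtain ⟨t, ht0, htsub⟩ := Metric.isOpen_iff.mp hScl.isOpen_compl ζ₁ hζ₁S
  -- the disconnecting open sets
  set u : Set (Cn n) := U ∩ g ⁻¹' (ball ζ₁ t) with hudef
  set v : Set (Cn n) := U ∩ g ⁻¹' ((closedBall ζ₁ (t / 2))ᶜ) with hvdef
  have hu : IsOpen u := hol.continuousOn.isOpen_inter_preimage hU isOpen_ball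
  have hv : IsOpen v := hol.continuousOn.isOpen_inter_preimage hU isClosed_closedBall.isOpen_compl
  -- roots in the t-ball around ζ₁ are equal to ζ₁
  have hroot_eq : ∀ ζ : ℂ, ζ ^ m = η → dist ζ ζ₁ < t → ζ = ζ₁ := by
    intro ζ hζ hd
    by_contra hne
    exact (htsub (mem_ball.mpr hd)) ⟨hζ, hne⟩
  intro hconn
  have hcover : f ⁻¹' {η} ∩ closedBall (0 : Cn n) r ⊆ u ∪ v := by
    rintro x ⟨hxf, hxb⟩
    have hxU : x ∈ U := hrU hxb
    have hgxm : g x ^ m = η := by rw [← hf]; exact hxf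
    by_cases hcase : g x = ζ₁
    · exact Or.inl ⟨hxU, by simp [hcase, mem_ball, ht0]⟩
    · refine Or.inr ⟨hxU, ?_⟩
      intro hmem
      have : dist (g x) ζ₁ < t := lt_of_le_of_lt (mem_closedBall.mp hmem) (by linarith)
      exact hcase (hroot_eq _ hgxm this)
  have hx₁u : x₁ ∈ u := ⟨hballU' hx₁b, by simp [hgx₁, mem_ball, ht0]⟩
  have hx₂v : x₂ ∈ v := by
    refine ⟨hballU' hx₂b, ?_⟩
    intro hmem
    have hd : dist (g x₂) ζ₁ < t := lt_of_le_of_lt (mem_closedBall.mp hmem) (by linarith)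
    exact hζ₂ne (hgx₂ ▸ hroot_eq _ (by rw [hgx₂]; exact hζ₂) (hgx₂ ▸ hd))
  obtain ⟨x, hxF, hxu, hxv⟩ :=
    hconn.isPreconnected u v hu hv hcover ⟨x₁, hx₁F, hx₁u⟩ ⟨x₂, hx₂F, hx₂v⟩
  have hgxm : g x ^ m = η := by rw [← hf]; exact hxF.1
  have hgx1 : g x = ζ₁ := hroot_eq _ hgxm (mem_ball.mp hxu.2)
  exact hxv.2 (mem_closedBall.mpr (by rw [hgx1, dist_self]; positivity))
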